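/- Let G be a group and A₀ ⊇ A₁ ⊇ A₂ ⊇ ⋯ a descending chain of subgroups such that the index [Aᵢ : Aᵢ₊₁] is infinite for infinitely many i. Then the inverse limit A = lim A₀/Aᵢ of the discrete coset spaces A₀/Aᵢ (with the natural projections as bonding maps), topologized as a subspace of the product, is a nonempty completely metrizable topological space in which every compact subset has empty interior; consequently, A is not the union of countably many compact subsets. -/

import Mathlib

/-! A point of `A = lim A₀/Aᵢ` has a basis of neighbourhoods `{y | yₙ = xₙ}`, and the threads
in such a neighbourhood reach, in coordinate `n + 1`, the whole fibre of `A₀/Aₙ₊₁ → A₀/Aₙ`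
over `xₙ`, which is in bijection with `Aₙ/Aₙ₊₁`. Taking `n` with `[Aₙ : Aₙ₊₁]` infinite, every
neighbourhood has infinite image in the discrete space `A₀/Aₙ₊₁`, while a compact set has
finite image there. As a closed subspace of a countable product of discrete spaces, `A` is
completely metrizable, so Baire's theorem rules out a countable cover by compact sets. -/

namespace ChainLimit

variable {G : Type} [Group G]

/-- The coset space `A₀/Aᵢ`. -/
def CosetSp (A : ℕ → Subgroup G) (i : ℕ) : Type :=
  ↥(A 0) ⧸ (A i).subgroupOf (A 0)

/-- The coset spaces `A₀/Aᵢ` carry the discrete topology. -/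
instance (A : ℕ → Subgroup G) (i : ℕ) : TopologicalSpace (CosetSp A i) := ⊥

instance (A : ℕ → Subgroup G) (i : ℕ) : DiscreteTopology (CosetSp A i) := ⟨rfl⟩

/-- The natural projection `A₀/Aᵢ₊₁ → A₀/Aᵢ`. -/
def proj (A : ℕ → Subgroup G) (hA : ∀ i, A (i + 1) ≤ A i) (i : ℕ) :
    CosetSp A (i + 1) → CosetSp A i :=
  Quotient.map' id (fun a b hab => by
    rw [QuotientGroup.leftRel_apply] at hab ⊢
    rw [Subgroup.mem_subgroupOf] at hab ⊢
    exact hA i hab)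

/-- The inverse limit `A = lim A₀/Aᵢ` of the discrete coset spaces, topologized as a
subspace of the product. -/
def LimCosets (A : ℕ → Subgroup G) (hA : ∀ i, A (i + 1) ≤ A i) : Type :=
  {c : ∀ i, CosetSp A i // ∀ i, proj A hA i (c (i + 1)) = c i}

instance (A : ℕ → Subgroup G) (hA : ∀ i, A (i + 1) ≤ A i) :
    TopologicalSpace (LimCosets A hA) :=
  instTopologicalSpaceSubtype

section

variable {A : ℕ → Subgroup G} {hA : ∀ i, A (i + 1) ≤ A i}

lemma proj_mk {i : ℕ} (g : A 0) :
    proj A hA i (QuotientGroup.mk g : CosetSp A (i + 1)) = (QuotientGroup.mk g : CosetSp A i) :=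
  rfl

lemma mk_eq_mk_iff {i : ℕ} {a b : A 0} :
    (QuotientGroup.mk a : CosetSp A i) = QuotientGroup.mk b ↔ ((a⁻¹ * b : A 0) : G) ∈ A i :=
  QuotientGroup.eq.trans Subgroup.mem_subgroupOf

variable (A hA) in
def threadOf (g : A 0) : LimCosets A hA :=
  ⟨fun _ => QuotientGroup.mk g, fun _ => rfl⟩

lemma exists_thread_coord_eq {i : ℕ} (c : CosetSp A i) : ∃ y : LimCosets A hA, y.1 i = c :=
  ⟨threadOf A hA (Quotient.out c), Quotient.out_eq' c⟩

lemma coord_eq_of_coord_eq_of_le {x y : LimCosets A hA} {i j : ℕ} (hij : i ≤ j)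
    (h : x.1 j = y.1 j) : x.1 i = y.1 i := by
  induction j, hij using Nat.le_induction with
  | base => exact h
  | succ j _ ih => exact ih (by rw [← x.2 j, ← y.2 j, h])

lemma continuous_coord (i : ℕ) : Continuous fun x : LimCosets A hA => x.1 i :=
  (continuous_apply i).comp continuous_subtype_val

variable (A hA) in
lemma isClosed_setOf_isThread :
    IsClosed {c : ∀ i, CosetSp A i | ∀ i, proj A hA i (c (i + 1)) = c i} := by
  simp only [Set.ofPred_forall]
  exact isClosed_iInter fun i =>
    isClosed_eq (continuous_of_discreteTopology.comp (continuous_apply (i + 1)))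
      (continuous_apply i)

instance : TopologicalSpace.IsCompletelyMetrizableSpace (LimCosets A hA) :=
  (isClosed_setOf_isThread A hA).isCompletelyMetrizableSpace

lemma eventually_setOf_coord_eq_subset {x : LimCosets A hA} {s : Set (LimCosets A hA)}
    (hs : s ∈ nhds x) : ∀ᶠ n in Filter.atTop, {y : LimCosets A hA | y.1 n = x.1 n} ⊆ s := by
  obtain ⟨u, hu, hus⟩ := Filter.mem_comap.1 (nhds_induced Subtype.val x ▸ hs)
  obtain ⟨_, ⟨z, m, rfl⟩, hxz, hzu⟩ :=
    (PiNat.isTopologicalBasis_cylinders _).mem_nhds_iff.1 hu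
  rw [← PiNat.mem_cylinder_iff_eq.1 hxz] at hzu
  filter_upwards [Filter.eventually_ge_atTop m] with n hmn y hy
  exact hus <| hzu <| PiNat.mem_cylinder_iff.2 fun i hi =>
    coord_eq_of_coord_eq_of_le (hi.le.trans hmn) hy

/-- The fibre of `A₀/Aₙ₊₁ → A₀/Aₙ` over `g Aₙ` contains the cosets `g h Aₙ₊₁`, `h ∈ Aₙ`. -/
lemma infinite_preimage_proj {n : ℕ} [Infinite (A n ⧸ (A (n + 1)).subgroupOf (A n))]
    (c : CosetSp A n) : (proj A hA n ⁻¹' {c}).Infinite := by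
  obtain ⟨g, rfl⟩ := QuotientGroup.mk_surjective c
  let ι := Subgroup.inclusion (antitone_nat_of_succ_le hA n.zero_le)
  refine Set.infinite_of_injective_forall_mem
    (f := fun q : A n ⧸ (A (n + 1)).subgroupOf (A n) =>
      (QuotientGroup.mk (g * ι q.out) : CosetSp A (n + 1))) ?_ fun q => ?_
  · intro q₁ q₂ hq
    rw [← q₁.out_eq, ← q₂.out_eq, QuotientGroup.eq, Subgroup.mem_subgroupOf]
    simpa [mul_assoc, ι] using mk_eq_mk_iff.1 hq
  · refine (proj_mk _).trans (mk_eq_mk_iff.2 ?_)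
    simp [ι]

lemma infinite_image_coord_setOf_coord_eq (x : LimCosets A hA) {n : ℕ}
    [Infinite (A n ⧸ (A (n + 1)).subgroupOf (A n))] :
    ((fun y : LimCosets A hA => y.1 (n + 1)) '' {y | y.1 n = x.1 n}).Infinite := by
  refine (infinite_preimage_proj (hA := hA) (x.1 n)).mono fun c hc => ?_
  obtain ⟨y, hy⟩ := exists_thread_coord_eq (hA := hA) c
  exact ⟨y, (y.2 n).symm.trans (hy ▸ hc), hy⟩

lemma interior_eq_empty_of_isCompact
    (hinf : {i : ℕ | Infinite (↥(A i) ⧸ (A (i + 1)).subgroupOf (A i))}.Infinite)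
    {K : Set (LimCosets A hA)} (hK : IsCompact K) : interior K = ∅ := by
  refine Set.eq_empty_iff_forall_notMem.2 fun x hx => ?_
  obtain ⟨n, hnK, hn⟩ :=
    ((eventually_setOf_coord_eq_subset (mem_interior_iff_mem_nhds.1 hx)).and_frequently
      (Nat.frequently_atTop_iff_infinite.2 hinf)).exists
  have : Infinite (A n ⧸ (A (n + 1)).subgroupOf (A n)) := hn
  exact (infinite_image_coord_setOf_coord_eq x).mono (Set.image_mono hnK)
    (hK.image (continuous_coord (n + 1))).finite_of_discrete

end

end ChainLimit

open ChainLimit in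
/-- If `A₀ ⊇ A₁ ⊇ ⋯` is a descending chain of subgroups of a group such that the
index `[Aᵢ : Aᵢ₊₁]` is infinite for infinitely many `i`, then `A = lim A₀/Aᵢ` is a
nonempty completely metrizable topological space in which every compact subset has
empty interior; consequently `A` is not the union of countably many compact
subsets. -/
theorem limCosets_nonempty_completelyMetrizable_compact_empty_interior
    {G : Type} [Group G] (A : ℕ → Subgroup G) (hA : ∀ i, A (i + 1) ≤ A i)
    (hinf : {i : ℕ | Infinite (↥(A i) ⧸ (A (i + 1)).subgroupOf (A i))}.Infinite) :
    Nonempty (LimCosets A hA) ∧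
    (∃ m : MetricSpace (LimCosets A hA),
      m.toPseudoMetricSpace.toUniformSpace.toTopologicalSpace =
        (inferInstance : TopologicalSpace (LimCosets A hA)) ∧
      @CompleteSpace (LimCosets A hA) m.toPseudoMetricSpace.toUniformSpace) ∧
    (∀ K : Set (LimCosets A hA), IsCompact K → interior K = ∅) ∧
    ¬∃ f : ℕ → Set (LimCosets A hA),
      (∀ n, IsCompact (f n)) ∧ (⋃ n, f n) = Set.univ := by
  have : Nonempty (LimCosets A hA) := ⟨threadOf A hA 1⟩
  refine ⟨this, TopologicalSpace.IsCompletelyMetrizableSpace.complete,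
    fun K hK => interior_eq_empty_of_isCompact hinf hK, ?_⟩
  rintro ⟨f, hf, hcover⟩
  obtain ⟨n, hn⟩ := nonempty_interior_of_iUnion_of_closed (fun n => (hf n).isClosed) hcover
  exact hn.ne_empty (interior_eq_empty_of_isCompact hinf (hf n))
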